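/- arXiv:1603.05515 — 3 statements merged into one kernel-verified Lean document; each statement's English description precedes it below -/
import Mathlib

section
/- For n odd, the characteristic polynomial of the pentadiagonal 2-Toeplitz matrix K_n factors as det(x·I_n − K_n) = b_1^{(n+1)/2} · b_2^{(n-1)/2} · A_n(x) · B_{n+1}(x), where {A_i} and {B_i} are the associated polynomial sequences. -/
open Polynomial Matrix

noncomputable def pentaK (n : ℕ) (a1 a2 b1 b2 c1 c2 : ℂ) : Matrix (Fin n) (Fin n) ℂ :=
  Matrix.of fun i j =>
    if i.val = j.val then (if i.val % 2 = 0 then a1 else a2)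
    else if j.val = i.val + 2 then (if i.val % 2 = 0 then b1 else b2)
    else if i.val = j.val + 2 then (if j.val % 2 = 0 then c1 else c2)
    else 0

/-!
Listing the even indices before the odd ones turns `K_n` into the direct sum of the tridiagonal
Toeplitz matrices `T_{t+1}(a₁, b₁, c₁)` and `T_t(a₂, b₂, c₂)`, so its characteristic polynomial is
the product of theirs. Expanding along the first row, `D_k = det (x - T_k(a, b, c))` satisfies
`D_{k+2} = (x - a) D_{k+1} - b c D_k`, and the recurrences defining `A` and `B` say precisely that
`b₂^k A_{2k+1}` and `b₁^k B_{2k}` satisfy the same recurrence with the same initial values.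
-/

namespace Matrix

variable {R : Type*}

section Zero

variable [Zero R]

def tridiag (k : ℕ) (a b c : R) : Matrix (Fin k) (Fin k) R :=
  of fun i j =>
    if (i : ℕ) = j then a else if (j : ℕ) = i + 1 then b else if (i : ℕ) = j + 1 then c else 0

lemma tridiag_submatrix_shift (a b c : R) {k m : ℕ} (d : ℕ) (r s : Fin k → Fin m)
    (hr : ∀ i, (r i : ℕ) = i + d) (hs : ∀ j, (s j : ℕ) = j + d) :
    (tridiag m a b c).submatrix r s = tridiag k a b c := by
  ext i j
  simp only [submatrix_apply, tridiag, of_apply, hr, hs]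
  split_ifs <;> first | rfl | omega

end Zero

section CommRing

variable [CommRing R] (a b c : R)

lemma det_tridiag_succ_succ (k : ℕ) :
    (tridiag (k + 2) a b c).det =
      a * (tridiag (k + 1) a b c).det - b * c * (tridiag k a b c).det := by
  -- the minor of the entry `(0, 1)` has first column `(c, 0, …, 0)`
  have hminor : ((tridiag (k + 2) a b c).submatrix Fin.succ (Fin.succ 0).succAbove).det =
      c * (tridiag k a b c).det := by
    rw [det_succ_column_zero, Fin.sum_univ_succ, Finset.sum_eq_zero fun i _ => ?_]
    · rw [submatrix_submatrix, Fin.succAbove_zero,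
        tridiag_submatrix_shift a b c 2 (Fin.succ ∘ Fin.succ) ((Fin.succ 0).succAbove ∘ Fin.succ)
          (fun i => by simp) (fun j => by simp)]
      simp [tridiag]
    · simp [tridiag]
  rw [det_succ_row_zero, Fin.sum_univ_succ, Fin.sum_univ_succ,
    Finset.sum_eq_zero fun j _ => ?_, Fin.succAbove_zero,
    tridiag_submatrix_shift a b c 1 _ _ (fun i => rfl) (fun j => rfl), hminor]
  · simp [tridiag]
    ring
  · simp [tridiag]

lemma det_tridiag_eq_of_recurrence (u : ℕ → R) (h0 : u 0 = 1) (h1 : u 1 = a)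
    (hrec : ∀ k, u (k + 2) = a * u (k + 1) - b * c * u k) :
    ∀ k, (tridiag k a b c).det = u k
  | 0 => by rw [h0, det_fin_zero]
  | 1 => by rw [h1, det_fin_one]; simp [tridiag]
  | k + 2 => by
    rw [det_tridiag_succ_succ, det_tridiag_eq_of_recurrence u h0 h1 hrec (k + 1),
      det_tridiag_eq_of_recurrence u h0 h1 hrec k, hrec]

lemma charmatrix_tridiag (k : ℕ) :
    charmatrix (tridiag k a b c) = tridiag k (X - C a) (-C b) (-C c) := by
  ext i j
  by_cases h : i = j
  · subst h
    simp [charmatrix_apply_eq, tridiag]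
  · have hv : (i : ℕ) ≠ j := Fin.val_ne_of_ne h
    rw [charmatrix_apply_ne _ _ _ h]
    simp only [tridiag, of_apply, if_neg hv]
    split_ifs <;> simp

lemma charpoly_tridiag_eq_of_recurrence (v : ℕ → R[X]) (h0 : v 0 = 1)
    (h1 : X * v 0 = C a * v 0 + C b * v 1)
    (hrec : ∀ k, X * v (k + 1) = C c * v k + C a * v (k + 1) + C b * v (k + 2)) (k : ℕ) :
    (tridiag k a b c).charpoly = C b ^ k * v k := by
  rw [charpoly, charmatrix_tridiag]
  refine det_tridiag_eq_of_recurrence (X - C a) (-C b) (-C c) (fun k => C b ^ k * v k)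
    (by simp [h0]) (by linear_combination (-1 : R[X]) * h1 + (X - C a) * h0) (fun k => ?_) k
  linear_combination (-C b ^ (k + 1)) * hrec k

end CommRing

end Matrix

def finEvenOddEquiv (t : ℕ) : Fin (t + 1) ⊕ Fin t ≃ Fin (2 * t + 1) where
  toFun := Sum.elim (fun j => ⟨2 * j, by omega⟩) (fun j => ⟨2 * j + 1, by omega⟩)
  invFun i := if h : i.val % 2 = 0 then Sum.inl ⟨i / 2, by omega⟩ else Sum.inr ⟨i / 2, by omega⟩
  left_inv := by
    rintro (j | j) <;> simp [Fin.ext_iff]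
    omega
  right_inv := by
    intro i
    by_cases h : i.val % 2 = 0 <;> simp [h, Fin.ext_iff] <;> omega

lemma pentaK_submatrix_finEvenOddEquiv (t : ℕ) (a1 a2 b1 b2 c1 c2 : ℂ) :
    (pentaK (2 * t + 1) a1 a2 b1 b2 c1 c2).submatrix (finEvenOddEquiv t) (finEvenOddEquiv t) =
      fromBlocks (tridiag (t + 1) a1 b1 c1) 0 0 (tridiag t a2 b2 c2) := by
  ext (i | i) (j | j) <;>
    simp only [pentaK, tridiag, finEvenOddEquiv, submatrix_apply, of_apply, Equiv.coe_fn_mk,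
      Sum.elim_inl, Sum.elim_inr, fromBlocks_apply₁₁, fromBlocks_apply₁₂, fromBlocks_apply₂₁,
      fromBlocks_apply₂₂, Matrix.zero_apply] <;>
    split_ifs <;> first | rfl | omega

lemma charpoly_pentaK (t : ℕ) (a1 a2 b1 b2 c1 c2 : ℂ) :
    (pentaK (2 * t + 1) a1 a2 b1 b2 c1 c2).charpoly =
      (tridiag (t + 1) a1 b1 c1).charpoly * (tridiag t a2 b2 c2).charpoly := by
  rw [← charpoly_reindex (finEvenOddEquiv t).symm, reindex_apply, Equiv.symm_symm,
    pentaK_submatrix_finEvenOddEquiv, charpoly_fromBlocks_zero₂₁]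

theorem stmt7_general (a1 a2 b1 b2 c1 c2 : ℂ)
    (t : ℕ) (n : ℕ) (hn : n = 2 * t + 1)
    (A B : ℕ → Polynomial ℂ)
    (A1 : A 1 = 1)
    (hAr1 : Polynomial.X * A 1 = Polynomial.C a2 * A 1 + Polynomial.C b2 * A 3)
    (hAeven : ∀ i, 3 ≤ i → Even i →
      Polynomial.X * A (i - 1) =
        Polynomial.C c2 * A (i - 3) + Polynomial.C a2 * A (i - 1) + Polynomial.C b2 * A (i + 1))
    (B0 : B 0 = 1)
    (hBr0 : Polynomial.X * B 0 = Polynomial.C a1 * B 0 + Polynomial.C b1 * B 2)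
    (hBodd : ∀ i, 3 ≤ i → Odd i →
      Polynomial.X * B (i - 1) =
        Polynomial.C c1 * B (i - 3) + Polynomial.C a1 * B (i - 1) + Polynomial.C b1 * B (i + 1)) :
    (pentaK n a1 a2 b1 b2 c1 c2).charpoly =
      Polynomial.C (b1 ^ (t + 1) * b2 ^ t) * A n * B (n + 1) := by
  subst hn
  have hA := charpoly_tridiag_eq_of_recurrence a2 b2 c2 (fun k => A (2 * k + 1)) A1 hAr1
    fun k => by
      have h := hAeven (2 * k + 4) (by omega) ⟨k + 2, by ring⟩
      rwa [show 2 * k + 4 - 1 = 2 * (k + 1) + 1 by omega, show 2 * k + 4 - 3 = 2 * k + 1 by omega,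
        show 2 * k + 4 + 1 = 2 * (k + 2) + 1 by omega] at h
  have hB := charpoly_tridiag_eq_of_recurrence a1 b1 c1 (fun k => B (2 * k)) B0 hBr0
    fun k => by
      have h := hBodd (2 * k + 3) (by omega) ⟨k + 1, by ring⟩
      rwa [show 2 * k + 3 - 1 = 2 * (k + 1) by omega, show 2 * k + 3 - 3 = 2 * k by omega,
        show 2 * k + 3 + 1 = 2 * (k + 2) by omega] at h
  rw [charpoly_pentaK, hA, hB, show 2 * t + 1 + 1 = 2 * (t + 1) by ring, C_mul, C_pow, C_pow]
  ring

theorem stmt7 (a1 a2 b1 b2 c1 c2 : ℂ) (hb1 : b1 ≠ 0) (hb2 : b2 ≠ 0) (hc1 : c1 ≠ 0) (hc2 : c2 ≠ 0)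
    (t : ℕ) (ht : 1 ≤ t) (n : ℕ) (hn : n = 2 * t + 1)
    (A B : ℕ → Polynomial ℂ)
    (A0 : A 0 = 0) (A1 : A 1 = 1)
    (hAr0 : Polynomial.X * A 0 = Polynomial.C a1 * A 0 + Polynomial.C b1 * A 2)
    (hAr1 : Polynomial.X * A 1 = Polynomial.C a2 * A 1 + Polynomial.C b2 * A 3)
    (hAodd : ∀ i, 3 ≤ i → Odd i →
      Polynomial.X * A (i - 1) =
        Polynomial.C c1 * A (i - 3) + Polynomial.C a1 * A (i - 1) + Polynomial.C b1 * A (i + 1))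
    (hAeven : ∀ i, 3 ≤ i → Even i →
      Polynomial.X * A (i - 1) =
        Polynomial.C c2 * A (i - 3) + Polynomial.C a2 * A (i - 1) + Polynomial.C b2 * A (i + 1))
    (B0 : B 0 = 1) (B1 : B 1 = 0)
    (hBr0 : Polynomial.X * B 0 = Polynomial.C a1 * B 0 + Polynomial.C b1 * B 2)
    (hBr1 : Polynomial.X * B 1 = Polynomial.C a2 * B 1 + Polynomial.C b2 * B 3)
    (hBodd : ∀ i, 3 ≤ i → Odd i →
      Polynomial.X * B (i - 1) =
        Polynomial.C c1 * B (i - 3) + Polynomial.C a1 * B (i - 1) + Polynomial.C b1 * B (i + 1))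
    (hBeven : ∀ i, 3 ≤ i → Even i →
      Polynomial.X * B (i - 1) =
        Polynomial.C c2 * B (i - 3) + Polynomial.C a2 * B (i - 1) + Polynomial.C b2 * B (i + 1)) :
    (pentaK n a1 a2 b1 b2 c1 c2).charpoly =
      Polynomial.C (b1 ^ (t + 1) * b2 ^ t) * A n * B (n + 1) :=
  stmt7_general a1 a2 b1 b2 c1 c2 t n hn A B A1 hAr1 hAeven B0 hBr0 hBodd
end

section
/- For n even and α a zero of the polynomial A_{n+1}, the vector (A_0(α), A_1(α), …, A_{n−1}(α))ᵀ is an eigenvector of the pentadiagonal 2-Toeplitz matrix K_n associated with eigenvalue α, where {A_i} is the associated polynomial sequence; this vector is nonzero since A_1(α)=1. -/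
open Polynomial Matrix

/-!
Row `k` of `K_n` is the recurrence for `x · A_k`, evaluated at `α` and with the terms beyond
the last column dropped. The dropped terms are multiples of `A_n(α)` and `A_{n+1}(α)`: the
second vanishes by assumption, the first because every `A_{2m}` is zero (the recurrence starts
from `A_0 = 0`, and `b_1 ≠ 0` propagates this along the even indices).
-/

def pentaRow {R : Type*} [Semiring R] (a1 a2 b1 b2 c1 c2 : R) (w : ℕ → R) (k : ℕ) : R :=
  (if k % 2 = 0 then a1 else a2) * w k + (if k % 2 = 0 then b1 else b2) * w (k + 2)
    + if 2 ≤ k then (if k % 2 = 0 then c1 else c2) * w (k - 2) else 0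

lemma pentaK_mulVec_apply {n : ℕ} (a1 a2 b1 b2 c1 c2 : ℂ) (w : ℕ → ℂ) (hwn : w n = 0)
    (hwn1 : w (n + 1) = 0) (i : Fin n) :
    (pentaK n a1 a2 b1 b2 c1 c2 *ᵥ fun j => w j) i = pentaRow a1 a2 b1 b2 c1 c2 w i := by
  obtain ⟨i, hi⟩ := i
  let entry : ℕ → ℂ := fun j =>
    if i = j then (if i % 2 = 0 then a1 else a2)
    else if j = i + 2 then (if i % 2 = 0 then b1 else b2)
    else if i = j + 2 then (if j % 2 = 0 then c1 else c2)
    else 0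
  have hsum : (pentaK n a1 a2 b1 b2 c1 c2 *ᵥ fun j => w j) ⟨i, hi⟩
      = ∑ j ∈ Finset.range (n + 2), entry j * w j := by
    rw [Finset.sum_range_succ, Finset.sum_range_succ, hwn, hwn1, mul_zero, mul_zero,
      add_zero, add_zero, ← Fin.sum_univ_eq_sum_range (fun j => entry j * w j)]
    rfl
  have hsplit : ∀ j, entry j * w j = (if i = j then (if i % 2 = 0 then a1 else a2) * w i else 0)
      + (if i + 2 = j then (if i % 2 = 0 then b1 else b2) * w (i + 2) else 0)
      + (if 2 ≤ i ∧ i - 2 = j then (if i % 2 = 0 then c1 else c2) * w (i - 2) else 0) := by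
    intro j
    simp only [entry]
    split_ifs <;> first | omega | (subst_vars; simp_all)
  rw [hsum, Finset.sum_congr rfl fun j _ => hsplit j, Finset.sum_add_distrib,
    Finset.sum_add_distrib, Finset.sum_ite_eq, Finset.sum_ite_eq]
  by_cases h2 : 2 ≤ i <;> simp [pentaRow, h2, show i < n + 2 by omega,
    show i + 2 < n + 2 by omega, show i - 2 < n + 2 by omega]

lemma pentaRow_eval_eq {R : Type*} [CommRing R] {a1 a2 b1 b2 c1 c2 : R} {A : ℕ → R[X]}
    (hA0 : X * A 0 = C a1 * A 0 + C b1 * A 2)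
    (hA1 : X * A 1 = C a2 * A 1 + C b2 * A 3)
    (hAodd : ∀ i, 3 ≤ i → Odd i →
      X * A (i - 1) = C c1 * A (i - 3) + C a1 * A (i - 1) + C b1 * A (i + 1))
    (hAeven : ∀ i, 3 ≤ i → Even i →
      X * A (i - 1) = C c2 * A (i - 3) + C a2 * A (i - 1) + C b2 * A (i + 1))
    (α : R) (k : ℕ) :
    pentaRow a1 a2 b1 b2 c1 c2 (fun j => (A j).eval α) k = α * (A k).eval α := by
  match k with
  | 0 => simpa [pentaRow] using (congrArg (eval α) hA0).symm
  | 1 => simpa [pentaRow] using (congrArg (eval α) hA1).symm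
  | k + 2 =>
    rcases Nat.mod_two_eq_zero_or_one k with hk | hk
    · have h := congrArg (eval α) (hAodd (k + 3) (by omega) (Nat.odd_iff.mpr (by omega)))
      simp only [Nat.add_one_sub_one, add_tsub_cancel_right, eval_mul, eval_add, eval_X, eval_C,
        pentaRow, Nat.add_mod_right, hk, ↓reduceIte, le_add_iff_nonneg_left, zero_le] at h ⊢
      linear_combination -h
    · have h := congrArg (eval α) (hAeven (k + 3) (by omega) (Nat.even_iff.mpr (by omega)))
      simp only [Nat.add_one_sub_one, add_tsub_cancel_right, eval_mul, eval_add, eval_X, eval_C,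
        pentaRow, Nat.add_mod_right, hk, one_ne_zero, ↓reduceIte, le_add_iff_nonneg_left,
        zero_le] at h ⊢
      linear_combination -h

lemma eq_zero_of_even_of_pentaRow_eq_mul {R : Type*} [Semiring R] [NoZeroDivisors R]
    {a1 a2 b1 b2 c1 c2 α : R} {w : ℕ → R} (hb1 : b1 ≠ 0) (hw0 : w 0 = 0)
    (hw : ∀ k, pentaRow a1 a2 b1 b2 c1 c2 w k = α * w k) {k : ℕ} (hk : Even k) : w k = 0 := by
  have step : ∀ m, w (2 * m) = 0 → (m ≠ 0 → w (2 * m - 2) = 0) → w (2 * m + 2) = 0 := by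
    intro m hm hm'
    have h := hw (2 * m)
    rcases eq_or_ne m 0 with rfl | hm0
    · simp_all [pentaRow]
    · simp_all [pentaRow, show 2 ≤ 2 * m by omega]
  obtain ⟨m, rfl⟩ := hk
  rw [← two_mul]
  induction m using Nat.twoStepInduction with
  | zero => exact hw0
  | one => exact step 0 hw0 (absurd rfl)
  | more m h0 h1 => exact step (m + 1) h1 (fun _ => h0)

theorem stmt13_general (a1 a2 b1 b2 c1 c2 : ℂ) (hb1 : b1 ≠ 0)
    (t : ℕ) (ht : 1 ≤ t) (n : ℕ) (hn : n = 2 * t)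
    (A : ℕ → Polynomial ℂ)
    (A0 : A 0 = 0) (A1 : A 1 = 1)
    (hAr0 : Polynomial.X * A 0 = Polynomial.C a1 * A 0 + Polynomial.C b1 * A 2)
    (hAr1 : Polynomial.X * A 1 = Polynomial.C a2 * A 1 + Polynomial.C b2 * A 3)
    (hAodd : ∀ i, 3 ≤ i → Odd i →
      Polynomial.X * A (i - 1) =
        Polynomial.C c1 * A (i - 3) + Polynomial.C a1 * A (i - 1) + Polynomial.C b1 * A (i + 1))
    (hAeven : ∀ i, 3 ≤ i → Even i →
      Polynomial.X * A (i - 1) =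
        Polynomial.C c2 * A (i - 3) + Polynomial.C a2 * A (i - 1) + Polynomial.C b2 * A (i + 1))
    (α : ℂ) (hroot : (A (n + 1)).eval α = 0) :
    (pentaK n a1 a2 b1 b2 c1 c2).mulVec (fun i : Fin n => (A i.val).eval α) =
      α • (fun i : Fin n => (A i.val).eval α) ∧
    (fun i : Fin n => (A i.val).eval α) ≠ 0 := by
  have hrow := pentaRow_eval_eq hAr0 hAr1 hAodd hAeven α
  have hAn : (A n).eval α = 0 :=
    eq_zero_of_even_of_pentaRow_eq_mul hb1 (by simp [A0]) hrow ⟨t, by omega⟩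
  refine ⟨funext fun i => ?_, fun h => ?_⟩
  · rw [pentaK_mulVec_apply a1 a2 b1 b2 c1 c2 (fun j => (A j).eval α) hAn hroot, hrow]
    rfl
  · simpa [A1] using congrFun h ⟨1, by omega⟩

theorem stmt13 (a1 a2 b1 b2 c1 c2 : ℂ) (hb1 : b1 ≠ 0) (hb2 : b2 ≠ 0) (hc1 : c1 ≠ 0) (hc2 : c2 ≠ 0)
    (t : ℕ) (ht : 1 ≤ t) (n : ℕ) (hn : n = 2 * t)
    (A : ℕ → Polynomial ℂ)
    (A0 : A 0 = 0) (A1 : A 1 = 1)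
    (hAr0 : Polynomial.X * A 0 = Polynomial.C a1 * A 0 + Polynomial.C b1 * A 2)
    (hAr1 : Polynomial.X * A 1 = Polynomial.C a2 * A 1 + Polynomial.C b2 * A 3)
    (hAodd : ∀ i, 3 ≤ i → Odd i →
      Polynomial.X * A (i - 1) =
        Polynomial.C c1 * A (i - 3) + Polynomial.C a1 * A (i - 1) + Polynomial.C b1 * A (i + 1))
    (hAeven : ∀ i, 3 ≤ i → Even i →
      Polynomial.X * A (i - 1) =
        Polynomial.C c2 * A (i - 3) + Polynomial.C a2 * A (i - 1) + Polynomial.C b2 * A (i + 1))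
    (α : ℂ) (hroot : (A (n + 1)).eval α = 0) :
    (pentaK n a1 a2 b1 b2 c1 c2).mulVec (fun i : Fin n => (A i.val).eval α) =
      α • (fun i : Fin n => (A i.val).eval α) ∧
    (fun i : Fin n => (A i.val).eval α) ≠ 0 :=
  stmt13_general a1 a2 b1 b2 c1 c2 hb1 t ht n hn A A0 A1 hAr0 hAr1 hAodd hAeven α hroot
end

section
/- Let K_6 be the 6×6 pentadiagonal 2-Toeplitz matrix with a_1·((a_1)²−2b_1c_1) ≠ 0 and a_2·((a_2)²−2b_2c_2) ≠ 0. Then K_6 is invertible and the (2,2) entry of K_6^{-1} equals (1/4)·[1/(a_2+√(2b_2c_2)) + 2/a_2 + 1/(a_2−√(2b_2c_2))] = ((a_2)² − b_2c_2)/(a_2·((a_2)² − 2b_2c_2)). -/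
open Polynomial Matrix

/-!
Listing the even indices before the odd ones turns `pentaK (2m)` into the block-diagonal matrix
`diag(T(a₁, b₁, c₁), T(a₂, b₂, c₂))` of two `m × m` tridiagonal Toeplitz matrices. For `m = 3`,
`det T(a, b, c) = a (a² - 2bc)` and the corner entry of `T⁻¹` is read off the adjugate; the
partial-fraction form comes from the eigenvalues `a` and `a ± √(2bc)` of `T`.
-/

namespace Matrix

theorem inv_blockDiagonal {n o α : Type*} [Fintype n] [DecidableEq n] [Fintype o] [DecidableEq o]
    [CommRing α] (M : o → Matrix n n α) (hM : ∀ k, IsUnit (M k).det) :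
    (blockDiagonal M)⁻¹ = blockDiagonal fun k => (M k)⁻¹ :=
  inv_eq_right_inv <| by
    rw [← blockDiagonal_mul, ← blockDiagonal_one]
    exact congrArg _ (funext fun k => mul_nonsing_inv _ (hM k))

end Matrix

def tridiagToeplitz {R : Type*} [Zero R] (m : ℕ) (a b c : R) : Matrix (Fin m) (Fin m) R :=
  Matrix.of fun i j =>
    if i.val = j.val then a else if j.val = i.val + 1 then b else if i.val = j.val + 1 then c else 0

theorem tridiagToeplitz_three {R : Type*} [Zero R] (a b c : R) :
    tridiagToeplitz 3 a b c = !![a, b, 0; c, a, b; 0, c, a] := by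
  ext i j
  fin_cases i <;> fin_cases j <;> rfl

theorem det_tridiagToeplitz_three {R : Type*} [CommRing R] (a b c : R) :
    (tridiagToeplitz 3 a b c).det = a * (a ^ 2 - 2 * b * c) := by
  rw [tridiagToeplitz_three, det_fin_three]
  simp only [of_apply, cons_val', cons_val_zero, cons_val_one, cons_val, cons_val_fin_one]
  ring

theorem inv_tridiagToeplitz_three_zero_zero {K : Type*} [Field K] (a b c : K) :
    (tridiagToeplitz 3 a b c)⁻¹ 0 0 = (a ^ 2 - b * c) / (a * (a ^ 2 - 2 * b * c)) := by
  rw [inv_def, ← det_tridiagToeplitz_three, Ring.inverse_eq_inv', tridiagToeplitz_three,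
    adjugate_fin_three_of, Matrix.smul_apply, of_apply, cons_val_zero, cons_val_zero, smul_eq_mul]
  ring

theorem reindex_pentaK (m : ℕ) (a1 a2 b1 b2 c1 c2 : ℂ) :
    reindex finProdFinEquiv.symm finProdFinEquiv.symm (pentaK (m * 2) a1 a2 b1 b2 c1 c2) =
      blockDiagonal ![tridiagToeplitz m a1 b1 c1, tridiagToeplitz m a2 b2 c2] := by
  ext ⟨i, r⟩ ⟨j, s⟩
  simp only [reindex_apply, submatrix_apply, Equiv.symm_symm, blockDiagonal_apply, pentaK,
    tridiagToeplitz, of_apply, finProdFinEquiv_apply_val]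
  fin_cases r <;> fin_cases s <;>
    simp only [zero_add, mul_eq_mul_left_iff, OfNat.ofNat_ne_zero, or_false,
      Nat.add_left_cancel_iff, Nat.mul_mod_right, Nat.add_mul_mod_self_left, Nat.mod_succ,
      one_ne_zero, zero_ne_one, ↓reduceIte, Fin.zero_eta, Fin.mk_one, Fin.isValue, cons_val_zero,
      cons_val_one, cons_val_fin_one, of_apply] <;>
    split_ifs <;> first | rfl | omega

theorem det_pentaK (m : ℕ) (a1 a2 b1 b2 c1 c2 : ℂ) :
    (pentaK (m * 2) a1 a2 b1 b2 c1 c2).det =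
      (tridiagToeplitz m a1 b1 c1).det * (tridiagToeplitz m a2 b2 c2).det := by
  rw [← det_reindex_self finProdFinEquiv.symm, reindex_pentaK, det_blockDiagonal, Fin.prod_univ_two]
  rfl

theorem inv_pentaK_apply (m : ℕ) (a1 a2 b1 b2 c1 c2 : ℂ)
    (h1 : IsUnit (tridiagToeplitz m a1 b1 c1).det) (h2 : IsUnit (tridiagToeplitz m a2 b2 c2).det)
    (i j : Fin m) (r : Fin 2) :
    (pentaK (m * 2) a1 a2 b1 b2 c1 c2)⁻¹ (finProdFinEquiv (i, r)) (finProdFinEquiv (j, r)) =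
      (![tridiagToeplitz m a1 b1 c1, tridiagToeplitz m a2 b2 c2] r)⁻¹ i j := by
  have hK := congrArg Inv.inv (reindex_pentaK m a1 a2 b1 b2 c1 c2)
  rw [inv_reindex, inv_blockDiagonal _ (Fin.forall_fin_two.2 ⟨h1, h2⟩)] at hK
  simpa using congrFun (congrFun hK (i, r)) (j, r)

theorem quarter_sum_inv_eq_div {K : Type*} [Field K] {a b c s : K} (h2 : (2 : K) ≠ 0)
    (hs : s ^ 2 = 2 * b * c) (ha : a ≠ 0) (hd : a ^ 2 - 2 * b * c ≠ 0) :
    (1 / 4) * (1 / (a + s) + 2 / a + 1 / (a - s)) = (a ^ 2 - b * c) / (a * (a ^ 2 - 2 * b * c)) := by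
  have hfac : a ^ 2 - 2 * b * c = (a + s) * (a - s) := by linear_combination hs
  obtain ⟨hp, hm⟩ := mul_ne_zero_iff.1 (hfac ▸ hd)
  have h4 : (4 : K) ≠ 0 := by simpa [show (4 : K) = 2 * 2 by norm_num] using h2
  field_simp
  linear_combination (2 * a ^ 2) * hs

theorem stmt18_general (a1 a2 b1 b2 c1 c2 : ℂ)
    (h1 : a1 * (a1 ^ 2 - 2 * b1 * c1) ≠ 0) (h2 : a2 * (a2 ^ 2 - 2 * b2 * c2) ≠ 0)
    (s2 : ℂ) (hs2 : s2 ^ 2 = 2 * b2 * c2) :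
    IsUnit (pentaK 6 a1 a2 b1 b2 c1 c2) ∧
    (pentaK 6 a1 a2 b1 b2 c1 c2)⁻¹ 1 1 =
      (1 / 4) * (1 / (a2 + s2) + 2 / a2 + 1 / (a2 - s2)) ∧
    (pentaK 6 a1 a2 b1 b2 c1 c2)⁻¹ 1 1 = (a2 ^ 2 - b2 * c2) / (a2 * (a2 ^ 2 - 2 * b2 * c2)) := by
  have hT1 : (tridiagToeplitz 3 a1 b1 c1).det ≠ 0 := by rwa [det_tridiagToeplitz_three]
  have hT2 : (tridiagToeplitz 3 a2 b2 c2).det ≠ 0 := by rwa [det_tridiagToeplitz_three]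
  have hval : (pentaK 6 a1 a2 b1 b2 c1 c2)⁻¹ 1 1 = (a2 ^ 2 - b2 * c2) / (a2 * (a2 ^ 2 - 2 * b2 * c2)) :=
    (inv_pentaK_apply 3 a1 a2 b1 b2 c1 c2 hT1.isUnit hT2.isUnit 0 0 1).trans
      (inv_tridiagToeplitz_three_zero_zero a2 b2 c2)
  refine ⟨(isUnit_iff_isUnit_det _).2 ?_, ?_, hval⟩
  · exact (det_pentaK 3 a1 a2 b1 b2 c1 c2).symm ▸ (mul_ne_zero hT1 hT2).isUnit
  · rw [hval, quarter_sum_inv_eq_div two_ne_zero hs2 (left_ne_zero_of_mul h2) (right_ne_zero_of_mul h2)]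

theorem stmt18 (a1 a2 b1 b2 c1 c2 : ℂ) (ha1 : a1 ≠ 0) (ha2 : a2 ≠ 0)
    (hb1 : b1 ≠ 0) (hb2 : b2 ≠ 0) (hc1 : c1 ≠ 0) (hc2 : c2 ≠ 0)
    (h1 : a1 * (a1 ^ 2 - 2 * b1 * c1) ≠ 0) (h2 : a2 * (a2 ^ 2 - 2 * b2 * c2) ≠ 0)
    (s2 : ℂ) (hs2 : s2 ^ 2 = 2 * b2 * c2) :
    IsUnit (pentaK 6 a1 a2 b1 b2 c1 c2) ∧
    (pentaK 6 a1 a2 b1 b2 c1 c2)⁻¹ 1 1 =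
      (1 / 4) * (1 / (a2 + s2) + 2 / a2 + 1 / (a2 - s2)) ∧
    (pentaK 6 a1 a2 b1 b2 c1 c2)⁻¹ 1 1 = (a2 ^ 2 - b2 * c2) / (a2 * (a2 ^ 2 - 2 * b2 * c2)) :=
  stmt18_general a1 a2 b1 b2 c1 c2 h1 h2 s2 hs2
end
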